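/- For the distribution P^α where X is a uniform bit, and A = X⊕Y, B = X⊕Z with Y, Z independent bits each equal to 1 with probability α (0 ≤ α ≤ 1/2), the optimal classical simultaneous guessing probability max over functions f,g:{0,1}→{0,1} of P[f(A) = g(B) = X] equals 1/2 when 1 - 1/√2 ≤ α ≤ 1/2, and equals (1-α)² when 0 ≤ α ≤ 1 - 1/√2. -/
import Mathlib

/-- The distribution P^α: X uniform bit, A = X⊕Y, B = X⊕Z with Y,Z independent
Bernoulli(α). P(x,a,b) = (1/2)·P[Y = x⊕a]·P[Z = x⊕b]. -/
noncomputable def Palpha (α : ℝ) (x a b : ZMod 2) : ℝ :=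
  (1/2) * (if a = x then 1 - α else α) * (if b = x then 1 - α else α)

/-- The winning probability of the deterministic classical strategy (f,g). -/
noncomputable def winProb (α : ℝ) (f g : ZMod 2 → ZMod 2) : ℝ :=
  ∑ x : ZMod 2, ∑ a : ZMod 2, ∑ b : ZMod 2,
    Palpha α x a b * (if f a = x ∧ g b = x then 1 else 0)

lemma zmod2_sum (h : ZMod 2 → ℝ) : ∑ v : ZMod 2, h v = h 0 + h 1 := by
  have hu : (Finset.univ : Finset (ZMod 2)) = {0, 1} := by decide
  rw [hu, Finset.sum_pair (by decide : (0:ZMod 2) ≠ 1)]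

set_option maxHeartbeats 4000000 in
theorem classical_value_Palpha (α : ℝ) (h0 : 0 ≤ α) (h1 : α ≤ 1/2) :
    (1 - 1/Real.sqrt 2 ≤ α →
      IsGreatest {p : ℝ | ∃ f g : ZMod 2 → ZMod 2, p = winProb α f g} (1/2)) ∧
    (α ≤ 1 - 1/Real.sqrt 2 →
      IsGreatest {p : ℝ | ∃ f g : ZMod 2 → ZMod 2, p = winProb α f g} ((1 - α)^2)) := by
  have key : ∀ v : ZMod 2, v = 0 ∨ v = 1 := by decide
  have hs : (0:ℝ) < Real.sqrt 2 := Real.sqrt_pos.2 (by norm_num)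
  have hsq : (1 / Real.sqrt 2)^2 = 1/2 := by
    rw [div_pow, one_pow, Real.sq_sqrt] <;> norm_num
  constructor
  · intro hα
    have ha : 1 - α ≤ 1 / Real.sqrt 2 := by linarith
    have hQ : (1 - α)^2 ≤ 1/2 := by
      calc (1-α)^2 ≤ (1/Real.sqrt 2)^2 := pow_le_pow_left₀ (by linarith) ha 2
        _ = 1/2 := hsq
    constructor
    · exact ⟨fun _ => 0, fun _ => 0, by
        simp only [winProb, Palpha, zmod2_sum]; norm_num; ring⟩
    · rintro p ⟨f, g, rfl⟩
      rcases key (f 0) with e1|e1 <;> rcases key (f 1) with e2|e2 <;>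
        rcases key (g 0) with e3|e3 <;> rcases key (g 1) with e4|e4 <;>
        simp only [winProb, Palpha, zmod2_sum, e1, e2, e3, e4] <;>
        norm_num <;> nlinarith [hQ, sq_nonneg α, sq_nonneg (1-α), sq_nonneg (1-2*α)]
  · intro hα
    have ha : 1 / Real.sqrt 2 ≤ 1 - α := by linarith
    have hQ : 1/2 ≤ (1 - α)^2 := by
      calc (1:ℝ)/2 = (1/Real.sqrt 2)^2 := hsq.symm
        _ ≤ (1-α)^2 := pow_le_pow_left₀ (by positivity) ha 2
    constructor
    · exact ⟨id, id, by
        simp only [winProb, Palpha, zmod2_sum, id]; norm_num; ring⟩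
    · rintro p ⟨f, g, rfl⟩
      rcases key (f 0) with e1|e1 <;> rcases key (f 1) with e2|e2 <;>
        rcases key (g 0) with e3|e3 <;> rcases key (g 1) with e4|e4 <;>
        simp only [winProb, Palpha, zmod2_sum, e1, e2, e3, e4] <;>
        norm_num <;> nlinarith [hQ, sq_nonneg α, sq_nonneg (1-α), sq_nonneg (1-2*α)]
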